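/- Let A be the complex 4 × 2 matrix A = (1/(2·3^{1/4})) · [[√(√3+1), (1−i)/√(√3+1)], [√(√3+1), (−1+i)/√(√3+1)], [√(√3−1), (1+i)/√(√3−1)], [√(√3−1), (−1−i)/√(√3−1)]]. Then for every pair of distinct indices i ≠ j, the 2 × 2 submatrix of A formed by rows i and j has smallest singular value exactly ½·√(2 − 2/√3). -/

import Mathlib

/-!
The squared singular values of a `2 × 2` matrix are the eigenvalues of its Gram matrix
`G = !![p, conj h; h, q]`, and `m` is the smaller one exactly when `G - m` is positive
semidefinite and singular: `m ≤ p`, `m ≤ q` and `‖h‖² = (p - m) (q - m)`. The lower bound is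
`2 Re (h u v̄) ≥ -2 ‖h‖ ‖u‖ ‖v‖` followed by AM-GM; the minimum is attained on the kernel
`(conj h, -(p - m))` of `G - m`.

Row `i` of `tetraMatrix` is `c • (aᵢ, conj ζᵢ / aᵢ)` with `c = 1 / (2 · 3^{1/4})`,
`aᵢ² = √3 + sᵢ`, `sᵢ = ±1` and `‖ζᵢ‖² = 2` (`sign` and `cross` below), so rows `i, j` have Gram
data `p = (2√3 + sᵢ + sⱼ) / (4√3)`, `q = (2√3 - sᵢ - sⱼ) / (4√3)`, `h = (ζᵢ + ζⱼ) / (4√3)`.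
For `m = (√3 - 1) / (2√3) = σ²` the determinant condition becomes
`‖ζᵢ + ζⱼ‖² = 4 - (sᵢ + sⱼ)²`, which holds for `i ≠ j`: rows in the same block have
`ζⱼ = -ζᵢ`, rows in different blocks have `ζᵢ ⟂ ζⱼ` over `ℝ`.
-/

open Matrix Complex

/-- The complex `4 × 2` matrix
`A = (1/(2·3^{1/4})) · [[√(√3+1), (1−i)/√(√3+1)], [√(√3+1), (−1+i)/√(√3+1)],
[√(√3−1), (1+i)/√(√3−1)], [√(√3−1), (−1−i)/√(√3−1)]]`. -/
noncomputable def tetraMatrix : Matrix (Fin 4) (Fin 2) ℂ :=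
  ((1 / (2 * Real.sqrt (Real.sqrt 3)) : ℝ) : ℂ) •
    !![(Real.sqrt (Real.sqrt 3 + 1) : ℂ),
         (1 - Complex.I) / (Real.sqrt (Real.sqrt 3 + 1) : ℂ);
       (Real.sqrt (Real.sqrt 3 + 1) : ℂ),
         (-1 + Complex.I) / (Real.sqrt (Real.sqrt 3 + 1) : ℂ);
       (Real.sqrt (Real.sqrt 3 - 1) : ℂ),
         (1 + Complex.I) / (Real.sqrt (Real.sqrt 3 - 1) : ℂ);
       (Real.sqrt (Real.sqrt 3 - 1) : ℂ),
         (-1 - Complex.I) / (Real.sqrt (Real.sqrt 3 - 1) : ℂ)]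

open ComplexConjugate

lemma two_mul_mul_mul_le_of_sq_le_mul {a b k x y : ℝ} (ha : 0 ≤ a) (hb : 0 ≤ b)
    (hk : k ^ 2 ≤ a * b) (hx : 0 ≤ x) (hy : 0 ≤ y) :
    2 * k * x * y ≤ a * x ^ 2 + b * y ^ 2 := by
  have hk' : k ≤ √a * √b := by
    rw [← Real.sqrt_mul ha]
    exact (le_abs_self k).trans (Real.abs_le_sqrt hk)
  nlinarith [sq_nonneg (√a * x - √b * y), Real.sq_sqrt ha, Real.sq_sqrt hb,
    mul_le_mul_of_nonneg_right hk' (mul_nonneg hx hy)]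

/-- The Hermitian form of the Gram matrix `!![p, conj h; h, q]`. -/
noncomputable def gramForm (p q : ℝ) (h u v : ℂ) : ℝ :=
  p * ‖u‖ ^ 2 + q * ‖v‖ ^ 2 + 2 * (h * (u * conj v)).re

lemma sq_norm_add_sq_norm_eq_gramForm (α β γ δ u v : ℂ) :
    ‖α * u + β * v‖ ^ 2 + ‖γ * u + δ * v‖ ^ 2 =
      gramForm (‖α‖ ^ 2 + ‖γ‖ ^ 2) (‖β‖ ^ 2 + ‖δ‖ ^ 2) (α * conj β + γ * conj δ) u v := by
  simp only [gramForm, Complex.sq_norm, Complex.normSq_apply, add_re, add_im, mul_re, mul_im,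
    conj_re, conj_im]
  ring

lemma le_gramForm {p q m : ℝ} {h u v : ℂ} (hp : m ≤ p) (hq : m ≤ q)
    (hh : ‖h‖ ^ 2 ≤ (p - m) * (q - m)) (huv : ‖u‖ ^ 2 + ‖v‖ ^ 2 = 1) :
    m ≤ gramForm p q h u v := by
  have hre : -(‖h‖ * ‖u‖ * ‖v‖) ≤ (h * (u * conj v)).re := by
    have := Complex.abs_re_le_norm (h * (u * conj v))
    rw [norm_mul, norm_mul, Complex.norm_conj] at this
    linarith [neg_abs_le (h * (u * conj v)).re]
  have hamgm := two_mul_mul_mul_le_of_sq_le_mul (sub_nonneg.2 hp) (sub_nonneg.2 hq) hh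
    (norm_nonneg u) (norm_nonneg v)
  unfold gramForm
  linear_combination hamgm + 2 * hre - m * huv

lemma exists_gramForm_eq {p q m : ℝ} {h : ℂ} (hp : m ≤ p)
    (hh : ‖h‖ ^ 2 = (p - m) * (q - m)) :
    ∃ u v : ℂ, ‖u‖ ^ 2 + ‖v‖ ^ 2 = 1 ∧ gramForm p q h u v = m := by
  obtain hpm | hpm := hp.eq_or_lt
  · exact ⟨1, 0, by simp, by simp [gramForm, hpm]⟩
  set a := p - m
  set t := (√(‖h‖ ^ 2 + a ^ 2))⁻¹
  have ht : t ^ 2 * (‖h‖ ^ 2 + a ^ 2) = 1 := by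
    have : 0 < a := sub_pos.2 hpm
    rw [inv_pow, Real.sq_sqrt (by positivity), inv_mul_cancel₀ (by positivity)]
  have hcross : h * (conj h * t * conj (-(a * t) : ℂ)) = ((-(a * t ^ 2 * ‖h‖ ^ 2) : ℝ) : ℂ) := by
    simp only [map_neg, map_mul, Complex.conj_ofReal]
    push_cast
    linear_combination (-(a : ℂ) * t ^ 2) * Complex.mul_conj' h
  refine ⟨conj h * t, -(a * t), ?_, ?_⟩
  · simp only [norm_mul, norm_neg, Complex.norm_conj, Complex.norm_real, Real.norm_eq_abs,
      mul_pow, sq_abs]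
    linear_combination ht
  · simp only [gramForm, norm_mul, norm_neg, Complex.norm_conj, Complex.norm_real,
      Real.norm_eq_abs, mul_pow, sq_abs, hcross, Complex.ofReal_re]
    linear_combination m * ht - t ^ 2 * a * hh

/-- The hypotheses say that `m` is the smallest eigenvalue of the Gram matrix of
`!![α, β; γ, δ]`. -/
theorem isLeast_sqrt_of_gram {α β γ δ : ℂ} {m : ℝ} (hp : m ≤ ‖α‖ ^ 2 + ‖γ‖ ^ 2)
    (hq : m ≤ ‖β‖ ^ 2 + ‖δ‖ ^ 2)
    (hh : ‖α * conj β + γ * conj δ‖ ^ 2 = (‖α‖ ^ 2 + ‖γ‖ ^ 2 - m) * (‖β‖ ^ 2 + ‖δ‖ ^ 2 - m)) :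
    IsLeast {t : ℝ | ∃ u v : ℂ, ‖u‖ ^ 2 + ‖v‖ ^ 2 = 1 ∧
      t = √(‖α * u + β * v‖ ^ 2 + ‖γ * u + δ * v‖ ^ 2)} (√m) := by
  refine ⟨?_, ?_⟩
  · obtain ⟨u, v, huv, hm⟩ := exists_gramForm_eq hp hh
    exact ⟨u, v, huv, by rw [sq_norm_add_sq_norm_eq_gramForm, hm]⟩
  · rintro _ ⟨u, v, huv, rfl⟩
    rw [sq_norm_add_sq_norm_eq_gramForm]
    exact Real.sqrt_le_sqrt (le_gramForm hp hq hh.le huv)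

namespace tetraMatrix

def sign : Fin 4 → ℝ := ![1, 1, -1, -1]

def cross : Fin 4 → ℂ := ![1 + I, -1 - I, 1 - I, -1 + I]

lemma sign_sq (i : Fin 4) : sign i ^ 2 = 1 := by
  fin_cases i <;> norm_num [sign]

lemma sign_mem_Icc (i : Fin 4) : sign i ∈ Set.Icc (-1) 1 := by
  fin_cases i <;> norm_num [sign]

lemma sq_norm_cross (i : Fin 4) : ‖cross i‖ ^ 2 = 2 := by
  fin_cases i <;> norm_num [cross, Complex.sq_norm, Complex.normSq_apply]

lemma sq_norm_cross_add {i j : Fin 4} (hij : i ≠ j) :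
    ‖cross i + cross j‖ ^ 2 = 4 - (sign i + sign j) ^ 2 := by
  revert hij
  fin_cases i <;> fin_cases j <;> norm_num [cross, sign, Complex.sq_norm, Complex.normSq_apply]

lemma sqrt_three_add_sign_pos (i : Fin 4) : 0 < √3 + sign i := by
  have : 1 < √3 := by
    rw [Real.lt_sqrt zero_le_one]
    norm_num
  fin_cases i <;> norm_num [sign] <;> linarith

lemma apply_zero (i : Fin 4) :
    tetraMatrix i 0 = (1 / (2 * √(√3)) : ℝ) * √(√3 + sign i) := by
  fin_cases i <;> simp [tetraMatrix, sign, sub_eq_add_neg]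

lemma apply_one (i : Fin 4) :
    tetraMatrix i 1 = (1 / (2 * √(√3)) : ℝ) * (conj (cross i) / √(√3 + sign i)) := by
  fin_cases i <;> simp [tetraMatrix, sign, cross, sub_eq_add_neg]

lemma one_div_two_mul_sqrt_sqrt_three_sq : (1 / (2 * √(√3))) ^ 2 = 1 / (4 * √3) := by
  rw [div_pow, mul_pow, Real.sq_sqrt (Real.sqrt_nonneg 3)]
  norm_num

lemma sq_norm_apply_zero (i : Fin 4) :
    ‖tetraMatrix i 0‖ ^ 2 = (√3 + sign i) / (4 * √3) := by
  rw [apply_zero, norm_mul, mul_pow, Complex.norm_real, Complex.norm_real, Real.norm_eq_abs,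
    Real.norm_eq_abs, sq_abs, sq_abs, one_div_two_mul_sqrt_sqrt_three_sq,
    Real.sq_sqrt (sqrt_three_add_sign_pos i).le]
  ring

lemma sq_norm_apply_one (i : Fin 4) :
    ‖tetraMatrix i 1‖ ^ 2 = (√3 - sign i) / (4 * √3) := by
  have hpos := sqrt_three_add_sign_pos i
  have h3 : √3 ^ 2 = 3 := Real.sq_sqrt (by norm_num)
  rw [apply_one, norm_mul, norm_div, mul_pow, div_pow, Complex.norm_conj, sq_norm_cross,
    Complex.norm_real, Complex.norm_real, Real.norm_eq_abs, Real.norm_eq_abs, sq_abs, sq_abs,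
    one_div_two_mul_sqrt_sqrt_three_sq, Real.sq_sqrt hpos.le]
  field_simp
  linear_combination sign_sq i - h3

lemma apply_zero_mul_conj_apply_one (i : Fin 4) :
    tetraMatrix i 0 * conj (tetraMatrix i 1) = cross i / (4 * √3) := by
  have hne : (√(√3 + sign i) : ℂ) ≠ 0 := by
    exact_mod_cast (Real.sqrt_pos.2 (sqrt_three_add_sign_pos i)).ne'
  have hc : ((1 / (2 * √(√3)) : ℝ) : ℂ) ^ 2 = ((1 / (4 * √3) : ℝ) : ℂ) := by
    rw [← Complex.ofReal_pow, one_div_two_mul_sqrt_sqrt_three_sq]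
  rw [apply_zero, apply_one, map_mul, map_div₀, Complex.conj_conj, Complex.conj_ofReal,
    Complex.conj_ofReal]
  field_simp
  rw [hc]
  push_cast
  field_simp

end tetraMatrix

lemma one_div_two_mul_sqrt_two_sub_two_div_sqrt_three :
    (1 / 2) * √(2 - 2 / √3) = √((√3 - 1) / (2 * √3)) := by
  rw [← Real.sqrt_sq (show (0 : ℝ) ≤ 1 / 2 by norm_num), ← Real.sqrt_mul (by positivity)]
  congr 1
  field_simp

/-- For every pair of distinct indices `i ≠ j`, the `2 × 2` submatrix of `tetraMatrix`
formed by rows `i` and `j` has smallest singular value — the minimum of `‖Mx‖` over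
Hermitian-unit `x ∈ ℂ²` — exactly `½ √(2 − 2/√3)`. -/
theorem tetraMatrix_submatrix_sigma_min (i j : Fin 4) (hij : i ≠ j) :
    IsLeast
      { t : ℝ | ∃ u v : ℂ, ‖u‖ ^ 2 + ‖v‖ ^ 2 = 1 ∧
          t = Real.sqrt (‖tetraMatrix i 0 * u + tetraMatrix i 1 * v‖ ^ 2
            + ‖tetraMatrix j 0 * u + tetraMatrix j 1 * v‖ ^ 2) }
      ((1 / 2) * Real.sqrt (2 - 2 / Real.sqrt 3)) := by
  have h3 : 0 < √3 := by positivity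
  obtain ⟨hi₁, hi₂⟩ := tetraMatrix.sign_mem_Icc i
  obtain ⟨hj₁, hj₂⟩ := tetraMatrix.sign_mem_Icc j
  rw [one_div_two_mul_sqrt_two_sub_two_div_sqrt_three]
  apply isLeast_sqrt_of_gram
  · rw [tetraMatrix.sq_norm_apply_zero, tetraMatrix.sq_norm_apply_zero]
    field_simp
    linarith
  · rw [tetraMatrix.sq_norm_apply_one, tetraMatrix.sq_norm_apply_one]
    field_simp
    linarith
  · rw [tetraMatrix.apply_zero_mul_conj_apply_one, tetraMatrix.apply_zero_mul_conj_apply_one,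
      ← add_div, norm_div, div_pow, tetraMatrix.sq_norm_cross_add hij,
      tetraMatrix.sq_norm_apply_zero, tetraMatrix.sq_norm_apply_zero,
      tetraMatrix.sq_norm_apply_one, tetraMatrix.sq_norm_apply_one, norm_mul, Complex.norm_real,
      Real.norm_of_nonneg h3.le, Complex.norm_ofNat]
    field_simp
    ring
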